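/- Let L : H → G be bounded linear with 0 < ‖L‖ ≤ 1, let γ > 0, and let A, B be strictly positive operators on G with A ≼ B. Then L ⊡_γ A ≼ L ⊡_γ B, where L ⊡_γ B = L* ∘ (B⁻¹ + γ(Id_G − L L*))⁻¹ ∘ L. -/

import Mathlib

open ContinuousLinearMap MeasureTheory

noncomputable section

variable {E : Type*} [NormedAddCommGroup E] [InnerProductSpace ℝ E] [CompleteSpace E]
variable {H G : Type*} [NormedAddCommGroup H] [InnerProductSpace ℝ H] [CompleteSpace H]
  [NormedAddCommGroup G] [InnerProductSpace ℝ G] [CompleteSpace G]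

/-- Löwner partial order: `A ≼ B` iff `B - A` is a positive operator. -/
def Loewner (A B : E →L[ℝ] E) : Prop := (B - A).IsPositive

/-- Strictly positive operators: `α • Id ≼ A` for some `α > 0`. -/
def StrictlyPos (A : E →L[ℝ] E) : Prop :=
  IsSelfAdjoint A ∧ ∃ α : ℝ, 0 < α ∧ Loewner (α • (1 : E →L[ℝ] E)) A

/-- Bounded below linear operator. -/
def BoundedBelow (L : H →L[ℝ] G) : Prop := ∃ β : ℝ, 0 < β ∧ ∀ x : H, β * ‖x‖ ≤ ‖L x‖

/-- Resolvent cocomposition `L ⊡_γ B = L* ∘ (B⁻¹ + γ(Id − L L*))⁻¹ ∘ L`. -/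
def rcc (L : H →L[ℝ] G) (γ : ℝ) (B : G →L[ℝ] G) : H →L[ℝ] H :=
  (adjoint L) ∘L (Ring.inverse (Ring.inverse B + γ • ((1 : G →L[ℝ] G) - L ∘L adjoint L))) ∘L L

/-- Resolvent composition `L ⊙_γ B = (L ⊡_{1/γ} B⁻¹)⁻¹`. -/
def rc (L : H →L[ℝ] G) (γ : ℝ) (B : G →L[ℝ] G) : H →L[ℝ] H :=
  Ring.inverse (rcc L (1/γ) (Ring.inverse B))

/-- Parallel composition `L* ▸ B = (L* ∘ B⁻¹ ∘ L)⁻¹`. -/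
def parallelComp (L : H →L[ℝ] G) (B : G →L[ℝ] G) : H →L[ℝ] H :=
  Ring.inverse ((adjoint L) ∘L (Ring.inverse B) ∘L L)

/-- `g(A,B) = inf {λ > 0 : A ≼ λ B}`. -/
def gThomp (A B : E →L[ℝ] E) : ℝ := sInf {l : ℝ | 0 < l ∧ Loewner A (l • B)}

/-- Thompson metric. -/
def dThomp (A B : E →L[ℝ] E) : ℝ := Real.log (max (gThomp A B) (gThomp B A))

/-- The (unique) positive square root of a positive operator. -/
def opSqrt (A : E →L[ℝ] E) : E →L[ℝ] E :=
  letI := Classical.propDecidable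
  if h : ∃ S : E →L[ℝ] E, S.IsPositive ∧ S * S = A then h.choose else 0

/-- Real power `A^t` of a strictly positive operator, `t ∈ (0,1)`, via the
Balakrishnan integral formula `A^t = (sin (π t)/π) ∫₀^∞ s^{t-1} A (A + s)⁻¹ ds`. -/
def opRpow (A : E →L[ℝ] E) (t : ℝ) : E →L[ℝ] E :=
  (Real.sin (Real.pi * t) / Real.pi) •
    ∫ s in Set.Ioi (0 : ℝ), s ^ (t - 1) • (A * Ring.inverse (A + s • (1 : E →L[ℝ] E)))

/-- Geometric mean `A # B = A^{1/2} (A^{-1/2} B A^{-1/2})^{1/2} A^{1/2}`. -/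
def geomMean (A B : E →L[ℝ] E) : E →L[ℝ] E :=
  opSqrt A * opSqrt (Ring.inverse (opSqrt A) * B * Ring.inverse (opSqrt A)) * opSqrt A

/-- `t`-weighted geometric mean `A #_t B = A^{1/2} (A^{-1/2} B A^{-1/2})^t A^{1/2}`. -/
def wGeomMean (t : ℝ) (A B : E →L[ℝ] E) : E →L[ℝ] E :=
  opSqrt A * opRpow (Ring.inverse (opSqrt A) * B * Ring.inverse (opSqrt A)) t * opSqrt A

/-!
Inversion is antitone on invertible positive operators: for `y = B⁻¹ x` the quadratic form of
`B⁻¹` at `x` is `2⟪x, y⟫ - ⟪B y, y⟫ ≤ 2⟪x, y⟫ - ⟪A y, y⟫`, and the right-hand side is at most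
`⟪A⁻¹ x, x⟫` since `⟪A (y - A⁻¹ x), y - A⁻¹ x⟫ ≥ 0`. As `‖L‖ ≤ 1`, `Id - L L*` is positive, so
`B⁻¹ + γ (Id - L L*) ≼ A⁻¹ + γ (Id - L L*)` are both strictly positive; inverting once more and
conjugating by `L` gives the claim.
-/

open scoped InnerProductSpace Ring

namespace ContinuousLinearMap

section RCLike

variable {𝕜 F : Type*} [RCLike 𝕜] [NormedAddCommGroup F] [InnerProductSpace 𝕜 F]

instance : IsOrderedAddMonoid (F →L[𝕜] F) where
  add_le_add_left f g h k := by
    rw [le_def, add_sub_add_right_eq_sub]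
    exact h

lemma apply_ringInverse_apply {A : F →L[𝕜] F} (hA : IsUnit A) (x : F) : A (A⁻¹ʳ x) = x := by
  change (A * A⁻¹ʳ) x = x
  rw [Ring.mul_inverse_cancel A hA, one_apply_eq_self]

lemma adjoint_conj_le_adjoint_conj {F' : Type*} [NormedAddCommGroup F'] [InnerProductSpace 𝕜 F']
    [CompleteSpace F] [CompleteSpace F'] {S T : F →L[𝕜] F} (h : S ≤ T) (L : F' →L[𝕜] F) :
    adjoint L ∘L S ∘L L ≤ adjoint L ∘L T ∘L L := by
  rw [le_def] at h ⊢
  simpa only [comp_sub, sub_comp] using h.adjoint_conj L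

end RCLike

section Real

variable {F : Type*} [NormedAddCommGroup F] [InnerProductSpace ℝ F]

lemma _root_.loewner_iff_le {A B : F →L[ℝ] F} : Loewner A B ↔ A ≤ B := Iff.rfl

lemma IsPositive.two_inner_sub_inner_le_inner_ringInverse {A : F →L[ℝ] F} (hA : A.IsPositive)
    (hAu : IsUnit A) (x y : F) : 2 * ⟪x, y⟫_ℝ - ⟪A y, y⟫_ℝ ≤ ⟪A⁻¹ʳ x, x⟫_ℝ := by
  set z := A⁻¹ʳ x
  have hAz : A z = x := apply_ringInverse_apply hAu x
  have hsq := hA.inner_nonneg_left (y - z)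
  have hsymm : ⟪A y, z⟫_ℝ = ⟪y, x⟫_ℝ := by rw [← hAz]; exact hA.isSymmetric y z
  simp only [map_sub, inner_sub_left, inner_sub_right, hAz] at hsq
  rw [hsymm, real_inner_comm z x, real_inner_comm x y] at hsq
  linarith

variable [CompleteSpace F]

theorem ringInverse_le_ringInverse {A B : F →L[ℝ] F} (hA : 0 ≤ A) (hAu : IsUnit A)
    (hBu : IsUnit B) (hAB : A ≤ B) : B⁻¹ʳ ≤ A⁻¹ʳ := by
  have hA' := (nonneg_iff_isPositive A).1 hA
  have hB := (nonneg_iff_isPositive B).1 (hA.trans hAB)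
  rw [le_def, isPositive_iff']
  refine ⟨hA'.isSelfAdjoint.ringInverse.sub hB.isSelfAdjoint.ringInverse, fun x => ?_⟩
  set y := B⁻¹ʳ x
  have hBy : B y = x := apply_ringInverse_apply hBu x
  have hAyB : ⟪A y, y⟫_ℝ ≤ ⟪B y, y⟫_ℝ := by
    simpa [inner_sub_left] using ((le_def A B).1 hAB).inner_nonneg_left y
  have key : ⟪B⁻¹ʳ x, x⟫_ℝ ≤ ⟪A⁻¹ʳ x, x⟫_ℝ :=
    calc ⟪B⁻¹ʳ x, x⟫_ℝ = 2 * ⟪x, y⟫_ℝ - ⟪B y, y⟫_ℝ := by rw [hBy, real_inner_comm x y]; ring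
      _ ≤ 2 * ⟪x, y⟫_ℝ - ⟪A y, y⟫_ℝ := by linarith
      _ ≤ ⟪A⁻¹ʳ x, x⟫_ℝ := hA'.two_inner_sub_inner_le_inner_ringInverse hAu x y
  simpa [inner_sub_left] using key

lemma _root_.IsSelfAdjoint.le_smul_one_of_norm_le {A : F →L[ℝ] F} (hA : IsSelfAdjoint A) {c : ℝ}
    (hc : ‖A‖ ≤ c) : A ≤ c • 1 := by
  rw [le_def, isPositive_iff']
  refine ⟨((IsSelfAdjoint.all c).smul (.one _)).sub hA, fun x => ?_⟩
  have hAx : ⟪A x, x⟫_ℝ ≤ c * ‖x‖ ^ 2 :=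
    calc ⟪A x, x⟫_ℝ ≤ ‖A x‖ * ‖x‖ := real_inner_le_norm _ _
      _ ≤ ‖A‖ * ‖x‖ * ‖x‖ := by gcongr; exact A.le_opNorm x
      _ ≤ c * ‖x‖ ^ 2 := by rw [mul_assoc, ← sq]; gcongr
  simpa [inner_sub_left, real_inner_smul_left, real_inner_self_eq_norm_sq] using hAx

lemma isPositive_one_sub_comp_adjoint {F' : Type*} [NormedAddCommGroup F']
    [InnerProductSpace ℝ F'] [CompleteSpace F'] {L : F' →L[ℝ] F} (hL : ‖L‖ ≤ 1) :
    (1 - L ∘L adjoint L).IsPositive := by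
  have hLL : ‖L ∘L adjoint L‖ ≤ 1 := by
    calc ‖L ∘L adjoint L‖ ≤ ‖L‖ * ‖adjoint L‖ := opNorm_comp_le _ _
      _ = ‖L‖ * ‖L‖ := by rw [adjoint.norm_map]
      _ ≤ 1 := by nlinarith [norm_nonneg L]
  rw [← le_def]
  simpa using (isPositive_self_comp_adjoint L).isSelfAdjoint.le_smul_one_of_norm_le hLL

end Real

end ContinuousLinearMap

section SmulOne

variable {K R : Type*} [Field K] [Ring R] [Algebra K R] {c : K}

lemma isUnit_smul_one (hc : c ≠ 0) : IsUnit (c • (1 : R)) := by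
  simpa [Algebra.algebraMap_eq_smul_one] using (IsUnit.mk0 c hc).map (algebraMap K R)

lemma Ring.inverse_smul_one (hc : c ≠ 0) : (c • (1 : R))⁻¹ʳ = c⁻¹ • 1 :=
  Ring.inverse_unit ⟨c • 1, c⁻¹ • 1, by simp [smul_smul, hc], by simp [smul_smul, hc]⟩

end SmulOne

namespace StrictlyPos

variable {A : E →L[ℝ] E}

lemma nonneg (hA : StrictlyPos A) : 0 ≤ A :=
  let ⟨_, _, hα, hαA⟩ := hA
  ((nonneg_iff_isPositive _).2 (isPositive_one.smul_of_nonneg hα.le)).trans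
    (loewner_iff_le.1 hαA)

lemma isUnit (hA : StrictlyPos A) : IsUnit A := by
  obtain ⟨-, α, hα, hαA⟩ := hA
  refine isUnit_of_forall_le_norm_inner_map A (c := ⟨α, hα.le⟩) hα fun x => ?_
  have hx : α * ‖x‖ ^ 2 ≤ ⟪A x, x⟫_ℝ := by
    simpa [inner_sub_left, real_inner_smul_left, real_inner_self_eq_norm_sq]
      using hαA.inner_nonneg_left x
  calc ‖x‖ ^ 2 * α ≤ ⟪A x, x⟫_ℝ := by linarith
    _ ≤ ‖⟪A x, x⟫_ℝ‖ := Real.le_norm_self _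

lemma add_nonneg (hA : StrictlyPos A) {P : E →L[ℝ] E} (hP : 0 ≤ P) : StrictlyPos (A + P) :=
  let ⟨hsa, α, hα, hαA⟩ := hA
  ⟨hsa.add ((nonneg_iff_isPositive P).1 hP).isSelfAdjoint, α, hα,
    loewner_iff_le.2 (le_add_of_le_of_nonneg (loewner_iff_le.1 hαA) hP)⟩

lemma ringInverse (hA : StrictlyPos A) : StrictlyPos A⁻¹ʳ := by
  have hc : (0 : ℝ) < ‖A‖ + 1 := by positivity
  refine ⟨hA.1.ringInverse, (‖A‖ + 1)⁻¹, inv_pos.2 hc, ?_⟩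
  rw [loewner_iff_le, ← Ring.inverse_smul_one hc.ne']
  exact ringInverse_le_ringInverse hA.nonneg hA.isUnit (isUnit_smul_one hc.ne')
    (hA.1.le_smul_one_of_norm_le (le_add_of_nonneg_right zero_le_one))

end StrictlyPos

theorem rcc_monotone_general (L : H →L[ℝ] G) (hL1 : ‖L‖ ≤ 1)
    (γ : ℝ) (hγ : 0 < γ) (A B : G →L[ℝ] G) (hA : StrictlyPos A) (hB : StrictlyPos B)
    (hAB : Loewner A B) : Loewner (rcc L γ A) (rcc L γ B) := by
  have hΨ : 0 ≤ γ • (1 - L ∘L adjoint L) :=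
    (nonneg_iff_isPositive _).2 ((isPositive_one_sub_comp_adjoint hL1).smul_of_nonneg hγ.le)
  have hCA := hA.ringInverse.add_nonneg hΨ
  have hCB := hB.ringInverse.add_nonneg hΨ
  have hBA : B⁻¹ʳ ≤ A⁻¹ʳ :=
    ringInverse_le_ringInverse hA.nonneg hA.isUnit hB.isUnit (loewner_iff_le.1 hAB)
  have hC : B⁻¹ʳ + γ • (1 - L ∘L adjoint L) ≤ A⁻¹ʳ + γ • (1 - L ∘L adjoint L) :=
    add_le_add_left hBA _
  rw [loewner_iff_le, rcc, rcc]
  exact adjoint_conj_le_adjoint_conj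
    (ringInverse_le_ringInverse hCB.nonneg hCB.isUnit hCA.isUnit hC) L

theorem rcc_monotone (L : H →L[ℝ] G) (hL0 : 0 < ‖L‖) (hL1 : ‖L‖ ≤ 1)
    (γ : ℝ) (hγ : 0 < γ) (A B : G →L[ℝ] G) (hA : StrictlyPos A) (hB : StrictlyPos B)
    (hAB : Loewner A B) : Loewner (rcc L γ A) (rcc L γ B) :=
  rcc_monotone_general L hL1 γ hγ A B hA hB hAB

end
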